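/- Let {ψ(θ,S), θ,S ∈ T_0} be a biadmissible family of nonnegative random variables with E[ess sup_{θ,S ∈ T_0} ψ(θ,S)] < ∞, which is uniformly right continuous in expectation along stopping times. For θ, S ∈ T_0 define U_1(θ,S) = ess sup_{τ_1 ∈ T_θ} E[ψ(τ_1, S) | F_θ]. Then {U_1(θ,S)} is jointly right continuous in expectation along stopping times: for any θ, S ∈ T_0 and any sequences θ_n ↓ θ a.s. and S_n ↓ S a.s. of stopping times, E[U_1(θ_n, S_n)] → E[U_1(θ, S)]. -/

import Mathlib

open MeasureTheory Filter Set Topology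

variable {Ω : Type*}

/-- `τ` belongs to `T_0`: it is a stopping time of `𝓕` with values in `[0, T]`. -/
def MemT0 {m0 : MeasurableSpace Ω} (𝓕 : MeasureTheory.Filtration ℝ m0) (T : ℝ)
    (τ : Ω → ℝ) : Prop :=
  MeasureTheory.IsStoppingTime 𝓕 (fun ω => (τ ω : WithTop ℝ)) ∧ ∀ ω, τ ω ∈ Set.Icc (0 : ℝ) T

/-- `v` is an essential supremum of the family `f i`, `i` ranging over `{i | P i}`:
it dominates every member a.s. and is a.s. below any other a.s. upper bound. -/
def IsEssSupFam {m0 : MeasurableSpace Ω} (μ : MeasureTheory.Measure Ω) {ι : Sort*}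
    (P : ι → Prop) (f : ι → Ω → ℝ) (v : Ω → ℝ) : Prop :=
  (∀ i, P i → f i ≤ᵐ[μ] v) ∧ ∀ w : Ω → ℝ, (∀ i, P i → f i ≤ᵐ[μ] w) → v ≤ᵐ[μ] w

/-- `v` is an essential infimum of the family `f i`, `i` ranging over `{i | P i}`. -/
def IsEssInfFam {m0 : MeasurableSpace Ω} (μ : MeasureTheory.Measure Ω) {ι : Sort*}
    (P : ι → Prop) (f : ι → Ω → ℝ) (v : Ω → ℝ) : Prop :=
  (∀ i, P i → v ≤ᵐ[μ] f i) ∧ ∀ w : Ω → ℝ, (∀ i, P i → w ≤ᵐ[μ] f i) → w ≤ᵐ[μ] v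

/-- An admissible family of nonnegative random variables indexed by the stopping
times in `T_0`: `φ τ` is a nonnegative `F_τ`-measurable random variable, and
`φ τ = φ τ'` a.s. on `{τ = τ'}`. -/
def Admissible {m0 : MeasurableSpace Ω} (𝓕 : MeasureTheory.Filtration ℝ m0) (T : ℝ)
    (μ : MeasureTheory.Measure Ω) (φ : (Ω → ℝ) → Ω → ℝ) : Prop :=
  (∀ τ (hτ : MemT0 𝓕 T τ),
      Measurable[hτ.1.measurableSpace] (φ τ) ∧ ∀ ω, 0 ≤ φ τ ω) ∧
  ∀ τ τ', MemT0 𝓕 T τ → MemT0 𝓕 T τ' →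
    ∀ᵐ ω ∂μ, τ ω = τ' ω → φ τ ω = φ τ' ω

/-- An a.e. variant of admissibility (for families defined only up to a.s. equality,
such as value-function families): `φ τ` is a.s. nonnegative and a.s. equal to some
`F_τ`-measurable random variable, and `φ τ = φ τ'` a.s. on `{τ = τ'}`. -/
def AdmissibleAE {m0 : MeasurableSpace Ω} (𝓕 : MeasureTheory.Filtration ℝ m0) (T : ℝ)
    (μ : MeasureTheory.Measure Ω) (φ : (Ω → ℝ) → Ω → ℝ) : Prop :=
  (∀ τ (hτ : MemT0 𝓕 T τ),
      (∀ᵐ ω ∂μ, 0 ≤ φ τ ω) ∧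
      ∃ w : Ω → ℝ, Measurable[hτ.1.measurableSpace] w ∧ φ τ =ᵐ[μ] w) ∧
  ∀ τ τ', MemT0 𝓕 T τ → MemT0 𝓕 T τ' →
    ∀ᵐ ω ∂μ, τ ω = τ' ω → φ τ ω = φ τ' ω

/-- A biadmissible family: `ψ τ S` is a nonnegative `F_{τ ∨ S}`-measurable random
variable, and `ψ τ S = ψ τ' S'` a.s. on `{τ = τ'} ∩ {S = S'}`. -/
def Biadmissible {m0 : MeasurableSpace Ω} (𝓕 : MeasureTheory.Filtration ℝ m0) (T : ℝ)
    (μ : MeasureTheory.Measure Ω) (ψ : (Ω → ℝ) → (Ω → ℝ) → Ω → ℝ) : Prop :=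
  (∀ τ S (hτ : MemT0 𝓕 T τ) (hS : MemT0 𝓕 T S),
      Measurable[(hτ.1.max hS.1).measurableSpace] (ψ τ S) ∧ ∀ ω, 0 ≤ ψ τ S ω) ∧
  ∀ τ τ' S S', MemT0 𝓕 T τ → MemT0 𝓕 T τ' → MemT0 𝓕 T S → MemT0 𝓕 T S' →
    ∀ᵐ ω ∂μ, τ ω = τ' ω → S ω = S' ω → ψ τ S ω = ψ τ' S' ω

/-- `θn ↓ θ` a.s.: the sequence is a.s. nonincreasing and converges a.s. to `θ`. -/
def DownAS {m0 : MeasurableSpace Ω} (μ : MeasureTheory.Measure Ω)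
    (θn : ℕ → Ω → ℝ) (θ : Ω → ℝ) : Prop :=
  ∀ᵐ ω ∂μ, (∀ n, θn (n + 1) ω ≤ θn n ω) ∧
    Filter.Tendsto (fun n => θn n ω) Filter.atTop (nhds (θ ω))

/-- `θn ↑ θ` a.s.: the sequence is a.s. nondecreasing and converges a.s. to `θ`. -/
def UpAS {m0 : MeasurableSpace Ω} (μ : MeasureTheory.Measure Ω)
    (θn : ℕ → Ω → ℝ) (θ : Ω → ℝ) : Prop :=
  ∀ᵐ ω ∂μ, (∀ n, θn n ω ≤ θn (n + 1) ω) ∧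
    Filter.Tendsto (fun n => θn n ω) Filter.atTop (nhds (θ ω))

/-- The family `φ` is right continuous along stopping times in expectation. -/
def RCE {m0 : MeasurableSpace Ω} (𝓕 : MeasureTheory.Filtration ℝ m0) (T : ℝ)
    (μ : MeasureTheory.Measure Ω) (φ : (Ω → ℝ) → Ω → ℝ) : Prop :=
  ∀ θ, MemT0 𝓕 T θ → ∀ θn : ℕ → Ω → ℝ, (∀ n, MemT0 𝓕 T (θn n)) → DownAS μ θn θ →
    Filter.Tendsto (fun n => ∫ ω, φ (θn n) ω ∂μ) Filter.atTop (nhds (∫ ω, φ θ ω ∂μ))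

/-- The family `φ` is left continuous along stopping times in expectation. -/
def LCE {m0 : MeasurableSpace Ω} (𝓕 : MeasureTheory.Filtration ℝ m0) (T : ℝ)
    (μ : MeasureTheory.Measure Ω) (φ : (Ω → ℝ) → Ω → ℝ) : Prop :=
  ∀ θ, MemT0 𝓕 T θ → ∀ θn : ℕ → Ω → ℝ, (∀ n, MemT0 𝓕 T (θn n)) → UpAS μ θn θ →
    Filter.Tendsto (fun n => ∫ ω, φ (θn n) ω ∂μ) Filter.atTop (nhds (∫ ω, φ θ ω ∂μ))

/-- The biadmissible family `ψ` is uniformly right continuous in expectation along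
stopping times: for `S_n ↓ S` a.s. (all in `T_0`), the expectation of the essential
supremum over `θ ∈ T_0` of `|ψ(θ, S) - ψ(θ, S_n)|` (resp. `|ψ(S, θ) - ψ(S_n, θ)|`)
tends to `0`. -/
def URCE {m0 : MeasurableSpace Ω} (𝓕 : MeasureTheory.Filtration ℝ m0) (T : ℝ)
    (μ : MeasureTheory.Measure Ω) (ψ : (Ω → ℝ) → (Ω → ℝ) → Ω → ℝ) : Prop :=
  ∀ S, MemT0 𝓕 T S → ∀ Sn : ℕ → Ω → ℝ, (∀ n, MemT0 𝓕 T (Sn n)) → DownAS μ Sn S →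
    (∀ D : ℕ → Ω → ℝ,
      (∀ n, IsEssSupFam μ (MemT0 𝓕 T) (fun θ ω => |ψ θ S ω - ψ θ (Sn n) ω|) (D n)) →
      Filter.Tendsto (fun n => ∫ ω, D n ω ∂μ) Filter.atTop (nhds 0)) ∧
    ∀ D : ℕ → Ω → ℝ,
      (∀ n, IsEssSupFam μ (MemT0 𝓕 T) (fun θ ω => |ψ S θ ω - ψ (Sn n) θ ω|) (D n)) →
      Filter.Tendsto (fun n => ∫ ω, D n ω ∂μ) Filter.atTop (nhds 0)

/-- The biadmissible family `ψ` is uniformly left continuous in expectation along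
stopping times. -/
def ULCE {m0 : MeasurableSpace Ω} (𝓕 : MeasureTheory.Filtration ℝ m0) (T : ℝ)
    (μ : MeasureTheory.Measure Ω) (ψ : (Ω → ℝ) → (Ω → ℝ) → Ω → ℝ) : Prop :=
  ∀ S, MemT0 𝓕 T S → ∀ Sn : ℕ → Ω → ℝ, (∀ n, MemT0 𝓕 T (Sn n)) → UpAS μ Sn S →
    (∀ D : ℕ → Ω → ℝ,
      (∀ n, IsEssSupFam μ (MemT0 𝓕 T) (fun θ ω => |ψ θ S ω - ψ θ (Sn n) ω|) (D n)) →
      Filter.Tendsto (fun n => ∫ ω, D n ω ∂μ) Filter.atTop (nhds 0)) ∧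
    ∀ D : ℕ → Ω → ℝ,
      (∀ n, IsEssSupFam μ (MemT0 𝓕 T) (fun θ ω => |ψ S θ ω - ψ (Sn n) θ ω|) (D n)) →
      Filter.Tendsto (fun n => ∫ ω, D n ω ∂μ) Filter.atTop (nhds 0)

/-!
Write `v(θ, S) = E[U₁(θ, S)]`. The family `E[ψ(τ, S) | F_θ]`, `τ ∈ T_θ`, is closed under pairwise
maxima (paste two stopping times on the `F_θ`-event where one conditional gain beats the other),
so its essential supremum is the increasing limit of a sequence from the family and
`v(θ, S) = sup_{τ ∈ T_θ} E[ψ(τ, S)]`. Hence `v(θₙ, S) ≤ v(θ, S)`, while for each `τ ∈ T_θ`,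
`v(θₙ, S) ≥ E[ψ(τ ∨ θₙ, S)] → E[ψ(τ, S)]` by right continuity of `ψ` in its first argument; so
`v(θₙ, S) → v(θ, S)`. Replacing `S` by `Sₙ` moves every `E[ψ(τ, ·)]`, hence `v(θₙ, ·)`, by at most
`E[ess sup_τ |ψ(τ, S) - ψ(τ, Sₙ)|] → 0`.
-/

section EssentialSupremum

variable {m0 : MeasurableSpace Ω} {μ : Measure Ω} {ι : Type*} {P : ι → Prop}
  {f : ι → Ω → ℝ} {g v : Ω → ℝ}

theorem IsEssSupFam.ae_eq {w : Ω → ℝ} (hv : IsEssSupFam μ P f v) (hw : IsEssSupFam μ P f w) :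
    v =ᵐ[μ] w :=
  (hv.2 w hw.1).antisymm (hw.2 v hv.1)

lemma ae_bddAbove_range_of_ae_le {u : ℕ → Ω → ℝ} (hug : ∀ n, u n ≤ᵐ[μ] g) :
    ∀ᵐ ω ∂μ, BddAbove (range fun n => u n ω) := by
  filter_upwards [ae_all_iff.2 hug] with ω hω
  exact ⟨g ω, forall_mem_range.2 hω⟩

lemma integrable_iSup_of_ae_le {u : ℕ → Ω → ℝ} (hu : ∀ n, Integrable (u n) μ)
    (hg : Integrable g μ) (hug : ∀ n, u n ≤ᵐ[μ] g) :
    Integrable (fun ω => ⨆ n, u n ω) μ := by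
  refine integrable_of_le_of_le
    (AEMeasurable.iSup fun n => (hu n).aemeasurable).aestronglyMeasurable ?_ ?_ (hu 0) hg
  · filter_upwards [ae_bddAbove_range_of_ae_le hug] with ω hω using le_ciSup hω 0
  · filter_upwards [ae_all_iff.2 hug] with ω hω using ciSup_le hω

lemma iSup_ae_le_iSup_of_forall_exists {u u' : ℕ → Ω → ℝ} (hsub : ∀ n, ∃ m, u' m = u n)
    (hu'g : ∀ n, u' n ≤ᵐ[μ] g) :
    (fun ω => ⨆ n, u n ω) ≤ᵐ[μ] fun ω => ⨆ n, u' n ω := by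
  filter_upwards [ae_bddAbove_range_of_ae_le hu'g] with ω hω
  refine ciSup_le fun n => ?_
  obtain ⟨m, hm⟩ := hsub n
  exact (congrFun hm ω).ge.trans (le_ciSup hω m)

theorem exists_isEssSupFam_iSup {i₀ : ι} (hi₀ : P i₀) (hf : ∀ i, P i → Integrable (f i) μ)
    (hg : Integrable g μ) (hfg : ∀ i, P i → f i ≤ᵐ[μ] g) :
    ∃ j : ℕ → ι, (∀ n, P (j n)) ∧ IsEssSupFam μ P f (fun ω => ⨆ n, f (j n) ω) := by
  have hint : ∀ j : ℕ → ι, (∀ n, P (j n)) → Integrable (fun ω => ⨆ n, f (j n) ω) μ :=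
    fun j hj => integrable_iSup_of_ae_le (fun n => hf _ (hj n)) hg fun n => hfg _ (hj n)
  set R : Set ℝ := {x | ∃ j : ℕ → ι, (∀ n, P (j n)) ∧ ∫ ω, ⨆ n, f (j n) ω ∂μ = x}
  have hR : BddAbove R := by
    refine ⟨∫ ω, g ω ∂μ, ?_⟩
    rintro _ ⟨j, hj, rfl⟩
    refine integral_mono_ae (hint j hj) hg ?_
    filter_upwards [ae_all_iff.2 fun n => hfg _ (hj n)] with ω hω using ciSup_le hω
  obtain ⟨x, -, hx, hxR⟩ := exists_seq_tendsto_sSup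
    (show R.Nonempty from ⟨_, fun _ => i₀, fun _ => hi₀, rfl⟩) hR
  choose J hJ hJx using hxR
  -- interleaving countable subfamilies whose integrals approach `sSup R` attains it
  set j : ℕ → ι := fun m => J m.unpair.1 m.unpair.2
  have hj : ∀ n, P (j n) := fun n => hJ _ _
  have hRj : sSup R ≤ ∫ ω, ⨆ n, f (j n) ω ∂μ := by
    refine le_of_tendsto' hx fun k => ?_
    rw [← hJx k]
    exact integral_mono_ae (hint _ (hJ k)) (hint j hj) (iSup_ae_le_iSup_of_forall_exists
      (fun n => ⟨Nat.pair k n, by simp [j]⟩) fun n => hfg _ (hj n))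
  refine ⟨j, hj, fun i hi => ?_, fun w hw => ?_⟩
  -- prepending `i` to `j` cannot push the integral above `sSup R`, so it adds nothing a.e.
  · set j' : ℕ → ι := fun n => n.casesOn i j
    have hj' : ∀ n, P (j' n) := by rintro (_ | n); exacts [hi, hj n]
    have hjj' := iSup_ae_le_iSup_of_forall_exists (fun n => ⟨n + 1, rfl⟩) fun n => hfg _ (hj' n)
    have heq := (integral_eq_iff_of_ae_le (hint j hj) (hint j' hj') hjj').1
      (le_antisymm (integral_mono_ae (hint j hj) (hint j' hj') hjj')
        ((le_csSup hR ⟨j', hj', rfl⟩).trans hRj))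
    filter_upwards [heq, ae_bddAbove_range_of_ae_le fun n => hfg _ (hj' n)] with ω hω hbdd
    exact (le_ciSup hbdd 0).trans hω.ge
  · filter_upwards [ae_all_iff.2 fun n => hw _ (hj n)] with ω hω using ciSup_le hω

theorem exists_integrable_isEssSupFam {i₀ : ι} (hi₀ : P i₀)
    (hf : ∀ i, P i → Integrable (f i) μ) (hg : Integrable g μ) (hfg : ∀ i, P i → f i ≤ᵐ[μ] g) :
    ∃ v, Integrable v μ ∧ IsEssSupFam μ P f v := by
  obtain ⟨j, hj, hv⟩ := exists_isEssSupFam_iSup hi₀ hf hg hfg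
  exact ⟨_, integrable_iSup_of_ae_le (fun n => hf _ (hj n)) hg fun n => hfg _ (hj n), hv⟩

theorem DirectedOn.exists_seq_chain {α : Type*} {r : α → α → Prop} {s : Set α}
    (hdir : DirectedOn r s) {j : ℕ → α} (hj : ∀ n, j n ∈ s) :
    ∃ k : ℕ → α, (∀ n, k n ∈ s) ∧ (∀ n, r (k n) (k (n + 1))) ∧ ∀ n, r (j n) (k n) := by
  choose u hu hru hru' using hdir
  let k : ℕ → s := fun n => Nat.rec ⟨u _ (hj 0) _ (hj 0), hu _ _ _ _⟩
    (fun n k => ⟨u k k.2 (j (n + 1)) (hj _), hu _ _ _ _⟩) n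
  have hkk : ∀ n, r (k n).1 (k (n + 1)).1 := fun n => hru (k n).1 (k n).2 (j (n + 1)) (hj _)
  have hjk : ∀ n, r (j n) (k n).1 := by
    rintro (_ | n)
    exacts [hru _ (hj 0) _ (hj 0), hru' (k n).1 (k n).2 (j (n + 1)) (hj _)]
  exact ⟨fun n => (k n).1, fun n => (k n).2, hkk, hjk⟩

theorem IsEssSupFam.isLUB_integral {i₀ : ι} (hv : IsEssSupFam μ P f v) (hi₀ : P i₀)
    (hf : ∀ i, P i → Integrable (f i) μ) (hg : Integrable g μ) (hfg : ∀ i, P i → f i ≤ᵐ[μ] g)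
    (hdir : DirectedOn (fun i i' => f i ≤ᵐ[μ] f i') {i | P i}) :
    IsLUB ((fun i => ∫ ω, f i ω ∂μ) '' {i | P i}) (∫ ω, v ω ∂μ) := by
  obtain ⟨j, hj, hsup⟩ := exists_isEssSupFam_iSup hi₀ hf hg hfg
  have hjg : ∀ n, f (j n) ≤ᵐ[μ] g := fun n => hfg _ (hj n)
  have hint := integrable_iSup_of_ae_le (fun n => hf _ (hj n)) hg hjg
  rw [integral_congr_ae (hv.ae_eq hsup)]
  refine ⟨?_, fun b hb => ?_⟩
  · rintro _ ⟨i, hi, rfl⟩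
    exact integral_mono_ae (hf i hi) hint (hsup.1 i hi)
  obtain ⟨k, hk, hkk, hjk⟩ := hdir.exists_seq_chain hj
  have hmono : ∀ᵐ ω ∂μ, Monotone fun n => f (k n) ω := by
    filter_upwards [ae_all_iff.2 hkk] with ω hω using monotone_nat_of_le_succ hω
  have hlim : ∀ᵐ ω ∂μ, Tendsto (fun n => f (k n) ω) atTop (𝓝 (⨆ n, f (j n) ω)) := by
    filter_upwards [hmono, ae_all_iff.2 hjk, ae_all_iff.2 fun n => hsup.1 _ (hk n)]
      with ω hω_mono hω_jk hω_kv
    refine tendsto_atTop_isLUB hω_mono ⟨forall_mem_range.2 hω_kv, fun c hc => ?_⟩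
    exact ciSup_le fun n => (hω_jk n).trans (hc ⟨n, rfl⟩)
  exact le_of_tendsto' (integral_tendsto_of_tendsto_of_monotone (fun n => hf _ (hk n)) hint
    hmono hlim) fun n => hb ⟨k n, hk n, rfl⟩

end EssentialSupremum

lemma abs_sub_le_of_isLUB_image {α : Type*} {s : Set α} {a b : α → ℝ} {x y c : ℝ}
    (hx : IsLUB (a '' s) x) (hy : IsLUB (b '' s) y) (hab : ∀ i ∈ s, |a i - b i| ≤ c) :
    |x - y| ≤ c := by
  have key : ∀ {a b : α → ℝ} {x y : ℝ}, IsLUB (a '' s) x → IsLUB (b '' s) y →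
      (∀ i ∈ s, a i ≤ b i + c) → x ≤ y + c := by
    intro a b x y hx hy hab
    refine hx.2 ?_
    rintro _ ⟨i, hi, rfl⟩
    exact (hab i hi).trans (add_le_add_left (hy.1 ⟨i, hi, rfl⟩) c)
  rw [abs_sub_le_iff]
  constructor
  · linarith [key hx hy fun i hi => by linarith [(abs_sub_le_iff.1 (hab i hi)).1]]
  · linarith [key hy hx fun i hi => by linarith [(abs_sub_le_iff.1 (hab i hi)).2]]

lemma tendsto_of_isLUB_of_subset {A : ℕ → Set ℝ} {B : Set ℝ} {x : ℕ → ℝ} {y : ℝ}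
    (hx : ∀ n, IsLUB (A n) (x n)) (hy : IsLUB B y) (hAB : ∀ n, A n ⊆ B)
    (happrox : ∀ b ∈ B, ∃ a : ℕ → ℝ, (∀ n, a n ∈ A n) ∧ Tendsto a atTop (𝓝 b)) :
    Tendsto x atTop (𝓝 y) := by
  refine tendsto_order.2 ⟨fun c hc => ?_,
    fun c hc => Eventually.of_forall fun n => ((hx n).mono hy (hAB n)).trans_lt hc⟩
  obtain ⟨b, hb, hcb⟩ := (lt_isLUB_iff hy).1 hc
  obtain ⟨a, ha, hab⟩ := happrox b hb
  filter_upwards [hab.eventually (lt_mem_nhds hcb)] with n hn using hn.trans_le ((hx n).1 (ha n))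

lemma abs_integral_sub_integral_le {m0 : MeasurableSpace Ω} {μ : Measure Ω} {f₁ f₂ D : Ω → ℝ}
    (h₁ : Integrable f₁ μ) (h₂ : Integrable f₂ μ) (hD : Integrable D μ)
    (h : ∀ᵐ ω ∂μ, |f₁ ω - f₂ ω| ≤ D ω) :
    |∫ ω, f₁ ω ∂μ - ∫ ω, f₂ ω ∂μ| ≤ ∫ ω, D ω ∂μ := by
  rw [← integral_sub h₁ h₂]
  exact abs_integral_le_integral_abs.trans (integral_mono_ae (h₁.sub h₂).abs hD h)

theorem condExp_piecewise {E : Type*} [NormedAddCommGroup E] [NormedSpace ℝ E] [CompleteSpace E]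
    {m m0 : MeasurableSpace Ω} {μ : Measure Ω} {A : Set Ω} [DecidablePred (· ∈ A)] {f g : Ω → E}
    (hf : Integrable f μ) (hg : Integrable g μ) (hA : MeasurableSet[m] A) :
    μ[A.piecewise f g|m] =ᵐ[μ] A.piecewise (μ[f|m]) (μ[g|m]) := by
  rw [← Set.indicator_add_compl_eq_piecewise, ← Set.indicator_add_compl_eq_piecewise]
  by_cases hm : m ≤ m0
  · have hA0 : MeasurableSet A := hm A hA
    filter_upwards [condExp_add (hf.indicator hA0) (hg.indicator hA0.compl) m,
      condExp_indicator hf hA, condExp_indicator hg hA.compl] with ω h h₁ h₂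
    rw [h, Pi.add_apply, Pi.add_apply, h₁, h₂]
  · simp [condExp_of_not_le hm]

section StoppingTimes

variable {m0 : MeasurableSpace Ω} {μ : Measure Ω} {𝓕 : Filtration ℝ m0} {T : ℝ}
  {θ τ σ : Ω → ℝ}

theorem MemT0.sup (hτ : MemT0 𝓕 T τ) (hσ : MemT0 𝓕 T σ) :
    MemT0 𝓕 T (fun ω => τ ω ⊔ σ ω) :=
  ⟨hτ.1.max hσ.1, fun ω => ⟨le_sup_of_le_left (hτ.2 ω).1, sup_le (hτ.2 ω).2 (hσ.2 ω).2⟩⟩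

theorem MemT0.piecewise (hθ : IsStoppingTime 𝓕 (fun ω => (θ ω : WithTop ℝ))) {A : Set Ω}
    [DecidablePred (· ∈ A)] (hA : MeasurableSet[hθ.measurableSpace] A)
    (hτ : MemT0 𝓕 T τ) (hσ : MemT0 𝓕 T σ) (hθτ : ∀ ω, θ ω ≤ τ ω) (hθσ : ∀ ω, θ ω ≤ σ ω) :
    MemT0 𝓕 T (A.piecewise τ σ) := by
  refine ⟨fun t => ?_, fun ω => ?_⟩
  · have hAτ := (hθ.measurableSpace_mono hτ.1 (fun ω => WithTop.coe_le_coe.2 (hθτ ω)) A hA).2 t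
    have hAσ :=
      (hθ.measurableSpace_mono hσ.1 (fun ω => WithTop.coe_le_coe.2 (hθσ ω)) _ hA.compl).2 t
    convert hAτ.union hAσ using 1
    ext ω
    by_cases hω : ω ∈ A <;> simp [hω]
  · by_cases hω : ω ∈ A <;> simp [hω, hτ.2 ω, hσ.2 ω]

theorem DownAS.ae_le {θn : ℕ → Ω → ℝ} (h : DownAS μ θn θ) : ∀ᵐ ω ∂μ, ∀ n, θ ω ≤ θn n ω := by
  filter_upwards [h] with ω ⟨hanti, hlim⟩ n
  exact (antitone_nat_of_succ_le hanti).le_of_tendsto hlim n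

theorem DownAS.sup_left {θn : ℕ → Ω → ℝ} (h : DownAS μ θn θ) (hθτ : θ ≤ᵐ[μ] τ) :
    DownAS μ (fun n ω => τ ω ⊔ θn n ω) τ := by
  filter_upwards [h, hθτ] with ω ⟨hanti, hlim⟩ hle
  refine ⟨fun n => sup_le_sup_left (hanti n) _, ?_⟩
  have := (tendsto_const_nhds (x := τ ω)).max hlim
  rwa [max_eq_left hle] at this

end StoppingTimes

section Biadmissible

variable {m0 : MeasurableSpace Ω} {μ : Measure Ω} {𝓕 : Filtration ℝ m0} {T : ℝ}
  {ψ : (Ω → ℝ) → (Ω → ℝ) → Ω → ℝ} {Z : Ω → ℝ} {θ τ σ S : Ω → ℝ}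

def expectedRewards (𝓕 : Filtration ℝ m0) (T : ℝ) (μ : Measure Ω)
    (ψ : (Ω → ℝ) → (Ω → ℝ) → Ω → ℝ) (θ S : Ω → ℝ) : Set ℝ :=
  (fun τ => ∫ ω, ψ τ S ω ∂μ) '' {τ | MemT0 𝓕 T τ ∧ θ ≤ᵐ[μ] τ}

theorem Biadmissible.integrable (hψ : Biadmissible 𝓕 T μ ψ)
    (hψZ : ∀ τ σ, MemT0 𝓕 T τ → MemT0 𝓕 T σ → ψ τ σ ≤ᵐ[μ] Z) (hZ : Integrable Z μ)
    (hτ : MemT0 𝓕 T τ) (hσ : MemT0 𝓕 T σ) : Integrable (ψ τ σ) μ := by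
  refine hZ.mono' ((hψ.1 τ σ hτ hσ).1.mono (hτ.1.max hσ.1).measurableSpace_le
    le_rfl).aestronglyMeasurable ?_
  filter_upwards [hψZ τ σ hτ hσ] with ω hω
  rwa [Real.norm_eq_abs, abs_of_nonneg ((hψ.1 τ σ hτ hσ).2 ω)]

theorem Biadmissible.abs_sub_le (hψ : Biadmissible 𝓕 T μ ψ)
    (hψZ : ∀ τ σ, MemT0 𝓕 T τ → MemT0 𝓕 T σ → ψ τ σ ≤ᵐ[μ] Z) {τ' σ' : Ω → ℝ}
    (hτ : MemT0 𝓕 T τ) (hσ : MemT0 𝓕 T σ) (hτ' : MemT0 𝓕 T τ') (hσ' : MemT0 𝓕 T σ') :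
    ∀ᵐ ω ∂μ, |ψ τ σ ω - ψ τ' σ' ω| ≤ Z ω := by
  filter_upwards [hψZ τ σ hτ hσ, hψZ τ' σ' hτ' hσ'] with ω h h'
  exact abs_sub_le_of_nonneg_of_le ((hψ.1 τ σ hτ hσ).2 ω) h ((hψ.1 τ' σ' hτ' hσ').2 ω) h'

theorem Biadmissible.exists_isEssSupFam_abs_sub_left (hψ : Biadmissible 𝓕 T μ ψ)
    (hψZ : ∀ τ σ, MemT0 𝓕 T τ → MemT0 𝓕 T σ → ψ τ σ ≤ᵐ[μ] Z) (hZ : Integrable Z μ)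
    (hθ : MemT0 𝓕 T θ) (hσ : MemT0 𝓕 T σ) :
    ∃ D, Integrable D μ ∧ IsEssSupFam μ (MemT0 𝓕 T) (fun τ ω => |ψ θ τ ω - ψ σ τ ω|) D :=
  exists_integrable_isEssSupFam hθ
    (fun _ hτ => ((hψ.integrable hψZ hZ hθ hτ).sub (hψ.integrable hψZ hZ hσ hτ)).abs) hZ
    fun _ hτ => hψ.abs_sub_le hψZ hθ hτ hσ hτ

theorem Biadmissible.exists_isEssSupFam_abs_sub_right (hψ : Biadmissible 𝓕 T μ ψ)
    (hψZ : ∀ τ σ, MemT0 𝓕 T τ → MemT0 𝓕 T σ → ψ τ σ ≤ᵐ[μ] Z) (hZ : Integrable Z μ)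
    (hθ : MemT0 𝓕 T θ) (hσ : MemT0 𝓕 T σ) :
    ∃ D, Integrable D μ ∧ IsEssSupFam μ (MemT0 𝓕 T) (fun τ ω => |ψ τ θ ω - ψ τ σ ω|) D :=
  exists_integrable_isEssSupFam hθ
    (fun _ hτ => ((hψ.integrable hψZ hZ hτ hθ).sub (hψ.integrable hψZ hZ hτ hσ)).abs) hZ
    fun _ hτ => hψ.abs_sub_le hψZ hτ hθ hτ hσ

theorem Biadmissible.ae_eq_of_ae_eq_left (hψ : Biadmissible 𝓕 T μ ψ) (hτ : MemT0 𝓕 T τ)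
    (hσ : MemT0 𝓕 T σ) (hS : MemT0 𝓕 T S) (h : τ =ᵐ[μ] σ) : ψ τ S =ᵐ[μ] ψ σ S := by
  filter_upwards [hψ.2 τ σ S S hτ hσ hS hS, h] with ω hω heq using hω heq rfl

theorem Biadmissible.piecewise_left (hψ : Biadmissible 𝓕 T μ ψ) {A : Set Ω}
    [DecidablePred (· ∈ A)] (hτ : MemT0 𝓕 T τ) (hσ : MemT0 𝓕 T σ) (hS : MemT0 𝓕 T S)
    (hA : MemT0 𝓕 T (A.piecewise τ σ)) :
    ψ (A.piecewise τ σ) S =ᵐ[μ] A.piecewise (ψ τ S) (ψ σ S) := by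
  filter_upwards [hψ.2 _ τ S S hA hτ hS hS, hψ.2 _ σ S S hA hσ hS hS] with ω h₁ h₂
  by_cases hω : ω ∈ A
  · simpa [hω] using h₁ (by simp [hω]) rfl
  · simpa [hω] using h₂ (by simp [hω]) rfl

theorem Biadmissible.directedOn_condExp (hψ : Biadmissible 𝓕 T μ ψ)
    (hψZ : ∀ τ σ, MemT0 𝓕 T τ → MemT0 𝓕 T σ → ψ τ σ ≤ᵐ[μ] Z) (hZ : Integrable Z μ)
    (hθ : MemT0 𝓕 T θ) (hS : MemT0 𝓕 T S) :
    DirectedOn (fun τ τ' => μ[ψ τ S|hθ.1.measurableSpace] ≤ᵐ[μ] μ[ψ τ' S|hθ.1.measurableSpace])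
      {τ | MemT0 𝓕 T τ ∧ θ ≤ᵐ[μ] τ} := by
  classical
  rintro τ₁ ⟨hτ₁, hθτ₁⟩ τ₂ ⟨hτ₂, hθτ₂⟩
  set m := hθ.1.measurableSpace
  -- `τᵢ ⊔ θ` agrees with `τᵢ` a.s. and dominates `θ` everywhere, as pasting on `F_θ` requires
  set σ₁ : Ω → ℝ := fun ω => τ₁ ω ⊔ θ ω
  set σ₂ : Ω → ℝ := fun ω => τ₂ ω ⊔ θ ω
  have hσ₁ : MemT0 𝓕 T σ₁ := hτ₁.sup hθ
  have hσ₂ : MemT0 𝓕 T σ₂ := hτ₂.sup hθ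
  have hc₁ : μ[ψ σ₁ S|m] =ᵐ[μ] μ[ψ τ₁ S|m] := condExp_congr_ae <|
    hψ.ae_eq_of_ae_eq_left hσ₁ hτ₁ hS (by filter_upwards [hθτ₁] with ω h using sup_eq_left.2 h)
  have hc₂ : μ[ψ σ₂ S|m] =ᵐ[μ] μ[ψ τ₂ S|m] := condExp_congr_ae <|
    hψ.ae_eq_of_ae_eq_left hσ₂ hτ₂ hS (by filter_upwards [hθτ₂] with ω h using sup_eq_left.2 h)
  set A := {ω | μ[ψ σ₂ S|m] ω ≤ μ[ψ σ₁ S|m] ω}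
  have hA : MeasurableSet[m] A :=
    stronglyMeasurable_condExp.measurableSet_le stronglyMeasurable_condExp
  have hσ : MemT0 𝓕 T (A.piecewise σ₁ σ₂) :=
    MemT0.piecewise hθ.1 hA hσ₁ hσ₂ (fun _ => le_sup_right) fun _ => le_sup_right
  have hmax : μ[ψ (A.piecewise σ₁ σ₂) S|m] =ᵐ[μ] fun ω => μ[ψ σ₁ S|m] ω ⊔ μ[ψ σ₂ S|m] ω := by
    filter_upwards [condExp_congr_ae (hψ.piecewise_left hσ₁ hσ₂ hS hσ),
      condExp_piecewise (hψ.integrable hψZ hZ hσ₁ hS) (hψ.integrable hψZ hZ hσ₂ hS) hA]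
      with ω h₁ h₂
    rw [h₁, h₂]
    by_cases hω : ω ∈ A
    · rw [Set.piecewise_eq_of_mem _ _ _ hω, sup_eq_left.2 hω]
    · rw [Set.piecewise_eq_of_notMem _ _ _ hω, sup_eq_right.2 (le_of_not_ge hω)]
  refine ⟨A.piecewise σ₁ σ₂, ⟨hσ, Eventually.of_forall <|
    Set.le_piecewise (fun _ _ => le_sup_right) fun _ _ => le_sup_right⟩, ?_, ?_⟩
  · filter_upwards [hc₁, hmax] with ω h₁ h
    exact h₁ ▸ h ▸ le_sup_left
  · filter_upwards [hc₂, hmax] with ω h₂ h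
    exact h₂ ▸ h ▸ le_sup_right

theorem Biadmissible.isLUB_expectedRewards [IsFiniteMeasure μ] (hψ : Biadmissible 𝓕 T μ ψ)
    (hψZ : ∀ τ σ, MemT0 𝓕 T τ → MemT0 𝓕 T σ → ψ τ σ ≤ᵐ[μ] Z) (hZ : Integrable Z μ)
    (hθ : MemT0 𝓕 T θ) (hS : MemT0 𝓕 T S) {U : Ω → ℝ}
    (hU : IsEssSupFam μ (fun τ => MemT0 𝓕 T τ ∧ θ ≤ᵐ[μ] τ)
      (fun τ => μ[ψ τ S|hθ.1.measurableSpace]) U) :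
    IsLUB (expectedRewards 𝓕 T μ ψ θ S) (∫ ω, U ω ∂μ) := by
  have h := hU.isLUB_integral ⟨hθ, EventuallyLE.rfl⟩ (fun _ _ => integrable_condExp)
    integrable_condExp (fun τ hτ => condExp_mono (hψ.integrable hψZ hZ hτ.1 hS) hZ
      (hψZ τ S hτ.1 hS)) (hψ.directedOn_condExp hψZ hZ hθ hS)
  rwa [Set.image_congr fun τ _ => integral_condExp hθ.1.measurableSpace_le] at h

theorem URCE.rce_left (hurc : URCE 𝓕 T μ ψ) (hψ : Biadmissible 𝓕 T μ ψ)
    (hψZ : ∀ τ σ, MemT0 𝓕 T τ → MemT0 𝓕 T σ → ψ τ σ ≤ᵐ[μ] Z) (hZ : Integrable Z μ)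
    (hS : MemT0 𝓕 T S) : RCE 𝓕 T μ (fun τ => ψ τ S) := by
  intro θ hθ θn hθn hθd
  choose D hD hDsup using fun n => hψ.exists_isEssSupFam_abs_sub_left hψZ hZ hθ (hθn n)
  refine tendsto_iff_norm_sub_tendsto_zero.2 <| squeeze_zero (fun _ => norm_nonneg _)
    (fun n => ?_) ((hurc θ hθ θn hθn hθd).2 D hDsup)
  rw [Real.norm_eq_abs, abs_sub_comm]
  exact abs_integral_sub_integral_le (hψ.integrable hψZ hZ hθ hS)
    (hψ.integrable hψZ hZ (hθn n) hS) (hD n) ((hDsup n).1 S hS)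

theorem Biadmissible.tendsto_integral_of_downAS [IsFiniteMeasure μ] (hψ : Biadmissible 𝓕 T μ ψ)
    (hψZ : ∀ τ σ, MemT0 𝓕 T τ → MemT0 𝓕 T σ → ψ τ σ ≤ᵐ[μ] Z) (hZ : Integrable Z μ)
    (hrc : RCE 𝓕 T μ (fun τ => ψ τ S)) (hS : MemT0 𝓕 T S) {U : (Ω → ℝ) → Ω → ℝ}
    (hU : ∀ θ (hθ : MemT0 𝓕 T θ), IsEssSupFam μ (fun τ => MemT0 𝓕 T τ ∧ θ ≤ᵐ[μ] τ)
      (fun τ => μ[ψ τ S|hθ.1.measurableSpace]) (U θ))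
    {θn : ℕ → Ω → ℝ} (hθ : MemT0 𝓕 T θ) (hθn : ∀ n, MemT0 𝓕 T (θn n))
    (hθd : DownAS μ θn θ) :
    Tendsto (fun n => ∫ ω, U (θn n) ω ∂μ) atTop (𝓝 (∫ ω, U θ ω ∂μ)) := by
  refine tendsto_of_isLUB_of_subset
    (fun n => hψ.isLUB_expectedRewards hψZ hZ (hθn n) hS (hU _ (hθn n)))
    (hψ.isLUB_expectedRewards hψZ hZ hθ hS (hU θ hθ)) (fun n => ?_) ?_
  · rintro _ ⟨τ, ⟨hτ, hθnτ⟩, rfl⟩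
    refine ⟨τ, ⟨hτ, ?_⟩, rfl⟩
    filter_upwards [hθd.ae_le, hθnτ] with ω h₁ h₂ using (h₁ n).trans h₂
  · rintro _ ⟨τ, ⟨hτ, hθτ⟩, rfl⟩
    refine ⟨fun n => ∫ ω, ψ (fun ω => τ ω ⊔ θn n ω) S ω ∂μ,
      fun n => ⟨_, ⟨hτ.sup (hθn n), Eventually.of_forall fun _ => le_sup_right⟩, rfl⟩, ?_⟩
    exact hrc τ hτ _ (fun n => hτ.sup (hθn n)) (hθd.sup_left hθτ)

theorem Biadmissible.abs_integral_sub_le [IsFiniteMeasure μ] (hψ : Biadmissible 𝓕 T μ ψ)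
    (hψZ : ∀ τ σ, MemT0 𝓕 T τ → MemT0 𝓕 T σ → ψ τ σ ≤ᵐ[μ] Z) (hZ : Integrable Z μ)
    {S' U U' D : Ω → ℝ} (hθ : MemT0 𝓕 T θ) (hS : MemT0 𝓕 T S) (hS' : MemT0 𝓕 T S')
    (hU : IsEssSupFam μ (fun τ => MemT0 𝓕 T τ ∧ θ ≤ᵐ[μ] τ)
      (fun τ => μ[ψ τ S|hθ.1.measurableSpace]) U)
    (hU' : IsEssSupFam μ (fun τ => MemT0 𝓕 T τ ∧ θ ≤ᵐ[μ] τ)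
      (fun τ => μ[ψ τ S'|hθ.1.measurableSpace]) U')
    (hD : Integrable D μ)
    (hDsup : IsEssSupFam μ (MemT0 𝓕 T) (fun τ ω => |ψ τ S ω - ψ τ S' ω|) D) :
    |∫ ω, U' ω ∂μ - ∫ ω, U ω ∂μ| ≤ ∫ ω, D ω ∂μ := by
  refine abs_sub_le_of_isLUB_image (hψ.isLUB_expectedRewards hψZ hZ hθ hS' hU')
    (hψ.isLUB_expectedRewards hψZ hZ hθ hS hU) fun τ hτ => ?_
  rw [abs_sub_comm]
  exact abs_integral_sub_integral_le (hψ.integrable hψZ hZ hτ.1 hS)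
    (hψ.integrable hψZ hZ hτ.1 hS') hD (hDsup.1 τ hτ.1)

end Biadmissible

theorem U1_jointly_right_continuous_general
    {m0 : MeasurableSpace Ω} (μ : Measure Ω) [IsProbabilityMeasure μ]
    (𝓕 : Filtration ℝ m0) (T : ℝ)
    (ψ : (Ω → ℝ) → (Ω → ℝ) → Ω → ℝ)
    (hψ : Biadmissible 𝓕 T μ ψ)
    (Z : Ω → ℝ)
    (hZ : IsEssSupFam μ
      (fun p : (Ω → ℝ) × (Ω → ℝ) => MemT0 𝓕 T p.1 ∧ MemT0 𝓕 T p.2)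
      (fun p => ψ p.1 p.2) Z)
    (hZint : Integrable Z μ)
    (hψurc : URCE 𝓕 T μ ψ)
    (U₁ : (Ω → ℝ) → (Ω → ℝ) → Ω → ℝ)
    (hU₁ : ∀ θ S (hθ : MemT0 𝓕 T θ), MemT0 𝓕 T S →
      IsEssSupFam μ (fun τ => MemT0 𝓕 T τ ∧ θ ≤ᵐ[μ] τ)
        (fun τ => μ[ψ τ S | hθ.1.measurableSpace]) (U₁ θ S)) :
    ∀ θ S, MemT0 𝓕 T θ → MemT0 𝓕 T S →
      ∀ θn Sn : ℕ → Ω → ℝ,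
        (∀ n, MemT0 𝓕 T (θn n)) → (∀ n, MemT0 𝓕 T (Sn n)) →
        DownAS μ θn θ → DownAS μ Sn S →
        Filter.Tendsto (fun n => ∫ ω, U₁ (θn n) (Sn n) ω ∂μ) Filter.atTop
          (nhds (∫ ω, U₁ θ S ω ∂μ)) := by
  intro θ S hθ hS θn Sn hθn hSn hθd hSd
  have hψZ : ∀ τ σ, MemT0 𝓕 T τ → MemT0 𝓕 T σ → ψ τ σ ≤ᵐ[μ] Z :=
    fun τ σ hτ hσ => hZ.1 (τ, σ) ⟨hτ, hσ⟩
  have hθ_lim : Tendsto (fun n => ∫ ω, U₁ (θn n) S ω ∂μ) atTop (𝓝 (∫ ω, U₁ θ S ω ∂μ)) :=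
    hψ.tendsto_integral_of_downAS hψZ hZint (hψurc.rce_left hψ hψZ hZint hS) hS
      (fun θ hθ => hU₁ θ S hθ hS) hθ hθn hθd
  choose D hD hDsup using fun n => hψ.exists_isEssSupFam_abs_sub_right hψZ hZint hS (hSn n)
  have hS_lim : Tendsto (fun n => ∫ ω, U₁ (θn n) (Sn n) ω ∂μ - ∫ ω, U₁ (θn n) S ω ∂μ) atTop
      (𝓝 0) :=
    squeeze_zero_norm (fun n => hψ.abs_integral_sub_le hψZ hZint (hθn n) hS (hSn n)
      (hU₁ _ _ (hθn n) hS) (hU₁ _ _ (hθn n) (hSn n)) (hD n) (hDsup n))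
      ((hψurc S hS Sn hSn hSd).1 D hDsup)
  simpa using hS_lim.add hθ_lim

/-- Under uniform right continuity in expectation of the
biadmissible family `ψ`, the value family `U₁(θ,S) = ess sup_{τ₁ ∈ T_θ} E[ψ(τ₁,S) | F_θ]`
is jointly right continuous in expectation along stopping times:
if `θ_n ↓ θ` and `S_n ↓ S` a.s., then `E[U₁(θ_n, S_n)] → E[U₁(θ, S)]`. -/
theorem U1_jointly_right_continuous
    {m0 : MeasurableSpace Ω} (μ : Measure Ω) [IsProbabilityMeasure μ]
    (𝓕 : Filtration ℝ m0) (T : ℝ) (hT : 0 ≤ T)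
    (hFright : ∀ t : ℝ, 𝓕 t = ⨅ s ∈ Set.Ioi t, 𝓕 s)
    (hFnull : ∀ A : Set Ω, μ A = 0 → MeasurableSet[𝓕 0] A)
    (ψ : (Ω → ℝ) → (Ω → ℝ) → Ω → ℝ)
    (hψ : Biadmissible 𝓕 T μ ψ)
    (Z : Ω → ℝ)
    (hZ : IsEssSupFam μ
      (fun p : (Ω → ℝ) × (Ω → ℝ) => MemT0 𝓕 T p.1 ∧ MemT0 𝓕 T p.2)
      (fun p => ψ p.1 p.2) Z)
    (hZint : Integrable Z μ)
    (hψurc : URCE 𝓕 T μ ψ)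
    (U₁ : (Ω → ℝ) → (Ω → ℝ) → Ω → ℝ)
    (hU₁ : ∀ θ S (hθ : MemT0 𝓕 T θ), MemT0 𝓕 T S →
      IsEssSupFam μ (fun τ => MemT0 𝓕 T τ ∧ θ ≤ᵐ[μ] τ)
        (fun τ => μ[ψ τ S | hθ.1.measurableSpace]) (U₁ θ S)) :
    ∀ θ S, MemT0 𝓕 T θ → MemT0 𝓕 T S →
      ∀ θn Sn : ℕ → Ω → ℝ,
        (∀ n, MemT0 𝓕 T (θn n)) → (∀ n, MemT0 𝓕 T (Sn n)) →
        DownAS μ θn θ → DownAS μ Sn S →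
        Filter.Tendsto (fun n => ∫ ω, U₁ (θn n) (Sn n) ω ∂μ) Filter.atTop
          (nhds (∫ ω, U₁ θ S ω ∂μ)) :=
  U1_jointly_right_continuous_general μ 𝓕 T ψ hψ Z hZ hZint hψurc U₁ hU₁
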